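/- Let f be an IDE flow in a single-sink network and let [a, b] be an interval with b − a ≥ Σ_{e ∈ E} (τ_e + 1/(2ν_e)). If the total cumulative inflow into the sink over [a, b] is less than 1/2, i.e. Σ_{e ∈ δ⁻_t} (F⁻_e(b) − F⁻_e(a)) < 1/2, then the whole graph G (as an induced subgraph of itself) is sink-like on the interval [a, b − Σ_{e ∈ E} (τ_e + 1/(2ν_e))]. -/

import Mathlib

open MeasureTheory Set

noncomputable section

/-- A single-sink network: a finite directed graph with integer travel times and
capacities on the edges, a sink node, and network inflow rates at the nodes
supported in `[0, theta0]`. -/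
structure Network where
  V : Type
  E : Type
  fintypeV : Fintype V
  decV : DecidableEq V
  fintypeE : Fintype E
  decE : DecidableEq E
  src : E → V
  dst : E → V
  sink : V
  tau : E → ℕ
  nu : E → ℕ
  tau_pos : ∀ e, 1 ≤ tau e
  nu_pos : ∀ e, 1 ≤ nu e
  theta0 : ℝ
  theta0_nonneg : 0 ≤ theta0
  u : V → ℝ → ℝ
  u_nonneg : ∀ v θ, 0 ≤ u v θ
  u_sink : ∀ θ, u sink θ = 0
  u_integrable : ∀ v, MeasureTheory.Integrable (u v) MeasureTheory.volume
  u_support : ∀ v θ, θ ∉ Set.Icc 0 theta0 → u v θ = 0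

attribute [instance] Network.fintypeV Network.decV Network.fintypeE Network.decE

namespace Network

variable (N : Network)

/-- `N.IsWalkBetween v w p` : the list of edges `p` forms a walk from `v` to `w`. -/
def IsWalkBetween : N.V → N.V → List N.E → Prop
  | v, w, [] => v = w
  | v, w, e :: p => N.src e = v ∧ IsWalkBetween (N.dst e) w p

/-- A walk from `v` to the sink. -/
def IsWalk (v : N.V) (p : List N.E) : Prop := N.IsWalkBetween v N.sink p

/-- The sink is reachable from every node. -/
def Reachable : Prop := ∀ v : N.V, ∃ p, N.IsWalk v p

/-- The graph has no (nonempty) cycles. -/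
def Acyclic : Prop := ∀ v p, N.IsWalkBetween v v p → p = []

/-- Total travel time `τ(G)` of the network. -/
def tauSum : ℝ := ∑ e, (N.tau e : ℝ)

/-- Physical length of a path. -/
def pathTau (p : List N.E) : ℝ := (p.map fun e => (N.tau e : ℝ)).sum

/-- `τ(P_max)`: the maximum physical length of a simple path ending at the sink. -/
def tauPmax : ℝ :=
  sSup { x | ∃ v p, N.IsWalk v p ∧ (v :: p.map N.dst).Nodup ∧ x = N.pathTau p }

/-- Edges leaving `v`. -/
def outEdges (v : N.V) : Finset N.E := Finset.univ.filter fun e => N.src e = v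

/-- Edges entering `v`. -/
def inEdges (v : N.V) : Finset N.E := Finset.univ.filter fun e => N.dst e = v

/-- Cumulative network inflow `U_v(θ)`. -/
def cumInflow (v : N.V) (θ : ℝ) : ℝ := ∫ ζ in (0:ℝ)..θ, N.u v ζ

/-- Total inflow volume `U`. -/
def totalInflow : ℝ := ∑ v ∈ Finset.univ.erase N.sink, N.cumInflow v N.theta0

/-- `p` is a physically shortest `v`-`t` path. -/
def PhysShortest (v : N.V) (p : List N.E) : Prop :=
  N.IsWalk v p ∧ ∀ p', N.IsWalk v p' → N.pathTau p ≤ N.pathTau p'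

/-- Physical distance from `v` to the sink. -/
def physDist (v : N.V) : ℝ := sInf { x | ∃ p, N.IsWalk v p ∧ x = N.pathTau p }

/-- `E(T)`: edges with both endpoints in `T`. -/
def edgesIn (T : Finset N.V) : Finset N.E :=
  Finset.univ.filter fun e => N.src e ∈ T ∧ N.dst e ∈ T

/-- `δ⁻_T`: edges entering `T`. -/
def deltaMinus (T : Finset N.V) : Finset N.E :=
  Finset.univ.filter fun e => N.src e ∉ T ∧ N.dst e ∈ T

/-- `δ⁺_T`: edges leaving `T`. -/
def deltaPlus (T : Finset N.V) : Finset N.E :=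
  Finset.univ.filter fun e => N.src e ∈ T ∧ N.dst e ∉ T

/-- A flow over time: nonnegative, locally integrable edge in- and outflow rates,
vanishing for negative times. -/
structure Flow (N : Network) where
  fp : N.E → ℝ → ℝ
  fm : N.E → ℝ → ℝ
  fp_nonneg : ∀ e θ, 0 ≤ fp e θ
  fm_nonneg : ∀ e θ, 0 ≤ fm e θ
  fp_zero : ∀ e θ, θ < 0 → fp e θ = 0
  fp_locInt : ∀ e, MeasureTheory.LocallyIntegrable (fp e) MeasureTheory.volume
  fm_locInt : ∀ e, MeasureTheory.LocallyIntegrable (fm e) MeasureTheory.volume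

namespace Flow

variable {N : Network} (f : N.Flow)

/-- Cumulative edge inflow `F⁺_e`. -/
def Fp (e : N.E) (θ : ℝ) : ℝ := ∫ ζ in (0:ℝ)..θ, f.fp e ζ

/-- Cumulative edge outflow `F⁻_e`. -/
def Fm (e : N.E) (θ : ℝ) : ℝ := ∫ ζ in (0:ℝ)..θ, f.fm e ζ

/-- Queue length `q_e(θ) = F⁺_e(θ) - F⁻_e(θ + τ_e)`. -/
def queue (e : N.E) (θ : ℝ) : ℝ := f.Fp e θ - f.Fm e (θ + (N.tau e : ℝ))

/-- Edge load `F^Δ_e(θ) = F⁺_e(θ) - F⁻_e(θ)`. -/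
def load (e : N.E) (θ : ℝ) : ℝ := f.Fp e θ - f.Fm e θ

/-- Total flow volume in the network `F^Δ(θ)`. -/
def totalLoad (θ : ℝ) : ℝ := ∑ e, f.load e θ

/-- Flow volume having reached the sink, `Z(θ)`. -/
def Z (θ : ℝ) : ℝ :=
  ∑ e ∈ N.inEdges N.sink, f.Fm e θ - ∑ e ∈ N.outEdges N.sink, f.Fp e θ

/-- Instantaneous travel time `c_e(θ) = τ_e + q_e(θ)/ν_e`. -/
def c (e : N.E) (θ : ℝ) : ℝ := (N.tau e : ℝ) + f.queue e θ / (N.nu e : ℝ)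

/-- Node label `ℓ_v(θ)`: instantaneous distance from `v` to the sink. -/
def label (v : N.V) (θ : ℝ) : ℝ :=
  sInf { x | ∃ p, N.IsWalk v p ∧ x = (p.map fun e => f.c e θ).sum }

/-- Edge `e` is active at time `θ`. -/
def Active (e : N.E) (θ : ℝ) : Prop :=
  f.label (N.src e) θ = f.label (N.dst e) θ + f.c e θ

/-- `p` is an active `v`-`t` path at time `θ`. -/
def ActivePath (v : N.V) (p : List N.E) (θ : ℝ) : Prop :=
  N.IsWalk v p ∧ ∀ e ∈ p, f.Active e θ

/-- Feasibility of a flow over time: flow conservation at non-sink nodes,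
nonpositive excess at the sink, no outflow before `τ_e`, and queues operating
at capacity. -/
def Feasible : Prop :=
  (∀ v, v ≠ N.sink → ∀ᵐ θ ∂(volume : Measure ℝ), 0 ≤ θ →
      (∑ e ∈ N.outEdges v, f.fp e θ) - ∑ e ∈ N.inEdges v, f.fm e θ = N.u v θ) ∧
  (∀ᵐ θ ∂(volume : Measure ℝ), 0 ≤ θ →
      (∑ e ∈ N.outEdges N.sink, f.fp e θ) - ∑ e ∈ N.inEdges N.sink, f.fm e θ ≤ 0) ∧
  (∀ e θ, θ < (N.tau e : ℝ) → f.fm e θ = 0) ∧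
  (∀ e, ∀ᵐ θ ∂(volume : Measure ℝ), 0 ≤ θ →
      (0 < f.queue e θ → f.fm e (θ + (N.tau e : ℝ)) = (N.nu e : ℝ)) ∧
      (f.queue e θ ≤ 0 → f.fm e (θ + (N.tau e : ℝ)) = min (f.fp e θ) (N.nu e : ℝ)))

/-- Instantaneous dynamic equilibrium: a feasible flow only using active edges. -/
def IsIDE : Prop :=
  f.Feasible ∧ ∀ e, ∀ᵐ θ ∂(volume : Measure ℝ), 0 ≤ θ → 0 < f.fp e θ → f.Active e θ

/-- The flow terminates. -/
def Terminates : Prop := ∃ θ, N.theta0 ≤ θ ∧ f.totalLoad θ = 0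

/-- Makespan `Θ(f)`. -/
def makespan : ℝ := sInf { θ | N.theta0 ≤ θ ∧ f.totalLoad θ = 0 }

/-- Total travel time `Ψ(f)`. -/
def totalTravelTime : ℝ := ∑ e, ∫ θ in Set.Ici (0:ℝ), f.c e θ * f.fp e θ

/-- The induced subgraph on `T` is sink-like on `[θ1, θ2]`. -/
def SinkLike (T : Finset N.V) (θ1 θ2 : ℝ) : Prop :=
  N.sink ∈ T ∧
  (∀ v ∈ T, ∀ p, N.PhysShortest v p → ∀ e ∈ p, N.src e ∈ T ∧ N.dst e ∈ T) ∧
  (∑ e ∈ N.edgesIn T, f.load e θ1) +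
    (∑ e ∈ N.deltaMinus T, (f.Fm e θ2 - f.Fm e θ1)) +
    (∑ v ∈ T.erase N.sink, ∫ θ in θ1..θ2, N.u v θ) < 1/2

end Flow


namespace Flow

open intervalIntegral

variable {N : Network} (f : N.Flow)

/-- Budget of an edge. -/
def bud (N : Network) (e : N.E) : ℝ := (N.tau e : ℝ) + 1 / (2 * (N.nu e : ℝ))

lemma nu_pos' (e : N.E) : (0:ℝ) < (N.nu e : ℝ) := by
  exact_mod_cast Nat.lt_of_lt_of_le Nat.zero_lt_one (N.nu_pos e)

lemma tau_one_le (e : N.E) : (1:ℝ) ≤ (N.tau e : ℝ) := by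
  exact_mod_cast N.tau_pos e

lemma bud_pos (e : N.E) : 0 < bud N e := by
  have h1 := tau_one_le (N := N) e
  have h2 := nu_pos' (N := N) e
  have : 0 < 1 / (2 * (N.nu e : ℝ)) := by positivity
  unfold bud; linarith

lemma half_nu_pos (e : N.E) : 0 < 1 / (2 * (N.nu e : ℝ)) := by
  have := nu_pos' (N := N) e; positivity

lemma fp_ii (e : N.E) (x y : ℝ) : IntervalIntegrable (f.fp e) volume x y := by
  rw [intervalIntegrable_iff]
  exact ((f.fp_locInt e).integrableOn_isCompact isCompact_uIcc).mono_set Set.uIoc_subset_uIcc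

lemma fm_ii (e : N.E) (x y : ℝ) : IntervalIntegrable (f.fm e) volume x y := by
  rw [intervalIntegrable_iff]
  exact ((f.fm_locInt e).integrableOn_isCompact isCompact_uIcc).mono_set Set.uIoc_subset_uIcc

lemma fm_shift_ii (e : N.E) (c x y : ℝ) :
    IntervalIntegrable (fun t => f.fm e (t + c)) volume x y := by
  simpa using (f.fm_ii e (x + c) (y + c)).comp_add_right c

lemma Fp_diff (e : N.E) (x y : ℝ) : f.Fp e y - f.Fp e x = ∫ t in x..y, f.fp e t := by
  have := integral_add_adjacent_intervals (f.fp_ii e 0 x) (f.fp_ii e x y)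
  unfold Fp; linarith

lemma Fm_diff (e : N.E) (x y : ℝ) : f.Fm e y - f.Fm e x = ∫ t in x..y, f.fm e t := by
  have := integral_add_adjacent_intervals (f.fm_ii e 0 x) (f.fm_ii e x y)
  unfold Fm; linarith

lemma Fm_shift (e : N.E) (c x y : ℝ) :
    f.Fm e (y + c) - f.Fm e (x + c) = ∫ t in x..y, f.fm e (t + c) := by
  rw [Fm_diff, integral_comp_add_right]

lemma Fp_mono (e : N.E) {x y : ℝ} (h : x ≤ y) : f.Fp e x ≤ f.Fp e y := by
  have h2 := f.Fp_diff e x y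
  have h3 : 0 ≤ ∫ t in x..y, f.fp e t :=
    integral_nonneg h fun t _ => f.fp_nonneg e t
  linarith

lemma Fm_mono (e : N.E) {x y : ℝ} (h : x ≤ y) : f.Fm e x ≤ f.Fm e y := by
  have h2 := f.Fm_diff e x y
  have h3 : 0 ≤ ∫ t in x..y, f.fm e t :=
    integral_nonneg h fun t _ => f.fm_nonneg e t
  linarith

lemma Fp_cont (e : N.E) : Continuous (f.Fp e) :=
  continuous_primitive (fun x y => f.fp_ii e x y) 0

lemma Fm_cont (e : N.E) : Continuous (f.Fm e) :=
  continuous_primitive (fun x y => f.fm_ii e x y) 0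

lemma queue_cont (e : N.E) : Continuous (f.queue e) :=
  (f.Fp_cont e).sub ((f.Fm_cont e).comp (continuous_id.add continuous_const))

lemma Fp_zero (e : N.E) : f.Fp e 0 = 0 := integral_same

lemma Fp_nonneg (e : N.E) {x : ℝ} (hx : 0 ≤ x) : 0 ≤ f.Fp e x := by
  have := f.Fp_mono e hx; have := f.Fp_zero e; linarith

lemma Fm_zero' (e : N.E) : f.Fm e 0 = 0 := integral_same

lemma Fm_nonneg (e : N.E) {x : ℝ} (hx : 0 ≤ x) : 0 ≤ f.Fm e x := by
  have := f.Fm_mono e hx; have := f.Fm_zero' e; linarith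

lemma U_mono (v : N.V) {x y : ℝ} (h : x ≤ y) : 0 ≤ ∫ t in x..y, N.u v t :=
  integral_nonneg h fun t _ => N.u_nonneg v t

end Flow

namespace Flow

open intervalIntegral MeasureTheory

variable {N : Network} {f : N.Flow}

lemma ae_ne (c : ℝ) : ∀ᵐ t ∂(volume : Measure ℝ), t ≠ c := by
  rw [MeasureTheory.ae_iff]
  have : {a : ℝ | ¬a ≠ c} = {c} := by ext t; simp
  rw [this]
  exact measure_singleton c

lemma ae_Ioo_of_Icc {x y : ℝ} :
    ∀ᵐ t ∂((volume : Measure ℝ).restrict (Set.Icc x y)), t ∈ Set.Ioo x y := by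
  filter_upwards [ae_restrict_mem measurableSet_Icc, ae_restrict_of_ae (ae_ne x),
    ae_restrict_of_ae (ae_ne y)] with t ht hx hy
  exact ⟨lt_of_le_of_ne ht.1 (Ne.symm hx), lt_of_le_of_ne ht.2 hy⟩

lemma Fm_zero_of_le (hfe : f.Feasible) (e : N.E) {y : ℝ} (hy : y ≤ (N.tau e : ℝ)) :
    f.Fm e y = 0 := by
  have : (∫ t in (0:ℝ)..y, f.fm e t) = ∫ _ in (0:ℝ)..y, (0:ℝ) := by
    apply intervalIntegral.integral_congr_ae
    filter_upwards [ae_ne (N.tau e : ℝ)] with t hne ht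
    apply hfe.2.2.1 e
    rcases Set.mem_uIoc.mp ht with h | h
    · exact lt_of_le_of_ne (le_trans h.2 hy) hne
    · calc t ≤ 0 := h.2
        _ < 1 := one_pos
        _ ≤ _ := tau_one_le e
  unfold Fm
  rw [this, intervalIntegral.integral_zero]

lemma queue_zero (hfe : f.Feasible) (e : N.E) : f.queue e 0 = 0 := by
  unfold queue
  rw [Fm_zero_of_le hfe e (by simp), f.Fp_zero e]
  ring

lemma fourth (hfe : f.Feasible) (e : N.E) :
    ∀ᵐ θ ∂(volume : Measure ℝ), 0 ≤ θ →
      (0 < f.queue e θ → f.fm e (θ + (N.tau e : ℝ)) = (N.nu e : ℝ)) ∧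
      (f.queue e θ ≤ 0 → f.fm e (θ + (N.tau e : ℝ)) = min (f.fp e θ) (N.nu e : ℝ)) :=
  hfe.2.2.2 e

lemma queue_nonneg (hfe : f.Feasible) (e : N.E) {θ : ℝ} (hθ : 0 ≤ θ) :
    0 ≤ f.queue e θ := by
  by_contra hq
  push_neg at hq
  have h0 : f.queue e 0 = 0 := queue_zero hfe e
  set A := {ζ : ℝ | ζ ∈ Set.Icc 0 θ ∧ 0 ≤ f.queue e ζ} with hA
  have hsub : A ⊆ Set.Icc 0 θ := fun ζ h => h.1
  have hclosed : IsClosed A := by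
    apply IsClosed.inter isClosed_Icc
    exact isClosed_le continuous_const (f.queue_cont e)
  have hcomp : IsCompact A := isCompact_Icc.of_isClosed_subset hclosed hsub
  have hne : A.Nonempty := ⟨0, ⟨le_refl 0, hθ⟩, le_of_eq h0.symm⟩
  set s := sSup A with hs
  have hsA : s ∈ A := hcomp.sSup_mem hne
  have hsθ : s ≤ θ := hsA.1.2
  have hs0 : 0 ≤ s := hsA.1.1
  have hqs : 0 ≤ f.queue e s := hsA.2
  have hlt : ∀ ζ, s < ζ → ζ ≤ θ → f.queue e ζ < 0 := by
    intro ζ h1 h2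
    by_contra h3
    push_neg at h3
    exact absurd (le_csSup hcomp.bddAbove (⟨⟨le_trans hs0 h1.le, h2⟩, h3⟩ : ζ ∈ A))
      (not_le.mpr h1)
  have hint : (∫ t in s..θ, f.fm e (t + (N.tau e : ℝ))) ≤ ∫ t in s..θ, f.fp e t := by
    apply integral_mono_ae_restrict hsθ (f.fm_shift_ii e _ s θ) (f.fp_ii e s θ)
    filter_upwards [ae_Ioo_of_Icc, ae_restrict_of_ae (fourth hfe e)] with t ht hP
    have ht0 : 0 ≤ t := le_trans hs0 ht.1.le
    have := (hP ht0).2 (le_of_lt (hlt t ht.1 ht.2.le))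
    rw [this]
    exact min_le_left _ _
  have hFp := f.Fp_diff e s θ
  have hFm := f.Fm_shift e (N.tau e : ℝ) s θ
  have : f.queue e s ≤ f.queue e θ := by
    unfold queue
    linarith
  linarith

lemma fm_shift_le_nu (hfe : f.Feasible) (e : N.E) :
    ∀ᵐ t ∂(volume : Measure ℝ), 0 ≤ t → f.fm e (t + (N.tau e : ℝ)) ≤ (N.nu e : ℝ) := by
  filter_upwards [fourth hfe e] with t hP ht
  rcases le_or_gt (f.queue e t) 0 with h | h
  · rw [(hP ht).2 h]; exact min_le_right _ _
  · rw [(hP ht).1 h]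

lemma Fm_shift_le (hfe : f.Feasible) (e : N.E) {x y : ℝ} (hx : 0 ≤ x) (hxy : x ≤ y) :
    f.Fm e (y + (N.tau e : ℝ)) - f.Fm e (x + (N.tau e : ℝ)) ≤ (N.nu e : ℝ) * (y - x) := by
  rw [Fm_shift]
  have h1 : (∫ t in x..y, f.fm e (t + (N.tau e : ℝ))) ≤ ∫ _ in x..y, (N.nu e : ℝ) := by
    apply integral_mono_ae_restrict hxy (f.fm_shift_ii e _ x y) intervalIntegrable_const
    filter_upwards [ae_Ioo_of_Icc, ae_restrict_of_ae (fm_shift_le_nu hfe e)] with t ht hP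
    exact hP (le_trans hx ht.1.le)
  rw [intervalIntegral.integral_const, smul_eq_mul] at h1
  linarith [h1]

lemma queue_lb (hfe : f.Feasible) (e : N.E) {x ζ : ℝ} (hx : 0 ≤ x) (hζ : x ≤ ζ) :
    f.queue e x - (N.nu e : ℝ) * (ζ - x) ≤ f.queue e ζ := by
  have h1 := f.Fp_mono e hζ
  have h2 := Fm_shift_le hfe e hx hζ
  unfold queue
  linarith

lemma drain (hfe : f.Feasible) (e : N.E) {x : ℝ} (hx : 0 ≤ x)
    (hq : ∀ ζ ∈ Set.Ico x (x + 1 / (2 * (N.nu e : ℝ))), 0 < f.queue e ζ) :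
    f.Fm e (x + 1 / (2 * (N.nu e : ℝ)) + (N.tau e : ℝ)) - f.Fm e (x + (N.tau e : ℝ))
      = 1/2 := by
  rw [Fm_shift]
  have hpos := half_nu_pos (N := N) e
  have : (∫ t in x..(x + 1 / (2 * (N.nu e : ℝ))), f.fm e (t + (N.tau e : ℝ)))
      = ∫ _ in x..(x + 1 / (2 * (N.nu e : ℝ))), (N.nu e : ℝ) := by
    apply intervalIntegral.integral_congr_ae
    filter_upwards [fourth hfe e, ae_ne (x + 1 / (2 * (N.nu e : ℝ)))] with t hP hne ht
    rw [Set.uIoc_of_le (by linarith)] at ht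
    have ht0 : 0 ≤ t := le_trans hx ht.1.le
    exact (hP ht0).1 (hq t ⟨ht.1.le, lt_of_le_of_ne ht.2 hne⟩)
  rw [this, intervalIntegral.integral_const, smul_eq_mul]
  have hν := nu_pos' (N := N) e
  field_simp
  ring

lemma q_half_drain (hfe : f.Feasible) (e : N.E) {θ : ℝ} (hθ : 0 ≤ θ)
    (hq : 1/2 ≤ f.queue e θ) :
    1/2 ≤ f.Fm e (θ + 1 / (2 * (N.nu e : ℝ)) + (N.tau e : ℝ)) - f.Fm e (θ + (N.tau e : ℝ)) := by
  have := drain hfe e hθ (fun ζ hζ => by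
    have hlb := queue_lb hfe e hθ hζ.1
    have hν := nu_pos' (N := N) e
    have h2 : (N.nu e : ℝ) * (ζ - θ) < (N.nu e : ℝ) * (1 / (2 * (N.nu e : ℝ))) := by
      apply mul_lt_mul_of_pos_left _ hν
      linarith [hζ.2]
    have h3 : (N.nu e : ℝ) * (1 / (2 * (N.nu e : ℝ))) = 1/2 := by field_simp
    linarith)
  linarith

lemma capped_clear (hfe : f.Feasible) (e : N.E) {x : ℝ} (hx : 0 ≤ x) :
    min (f.Fp e x) (f.Fm e (x + (N.tau e : ℝ)) + 1/2) ≤ f.Fm e (x + bud N e) := by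
  have hb : x + bud N e = x + 1 / (2 * (N.nu e : ℝ)) + (N.tau e : ℝ) := by
    unfold bud; ring
  rw [hb]
  by_cases hc : ∀ ζ ∈ Set.Ico x (x + 1 / (2 * (N.nu e : ℝ))), 0 < f.queue e ζ
  · have := drain hfe e hx hc
    have := min_le_right (f.Fp e x) (f.Fm e (x + (N.tau e : ℝ)) + 1/2)
    linarith
  · push_neg at hc
    obtain ⟨ζ, hζ, hq⟩ := hc
    have h1 : f.Fp e ζ ≤ f.Fm e (ζ + (N.tau e : ℝ)) := by
      have : f.queue e ζ = f.Fp e ζ - f.Fm e (ζ + (N.tau e : ℝ)) := rfl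
      linarith
    have h2 := f.Fp_mono e hζ.1
    have h3 : f.Fm e (ζ + (N.tau e : ℝ)) ≤ f.Fm e (x + 1 / (2 * (N.nu e : ℝ)) + (N.tau e : ℝ)) :=
      f.Fm_mono e (by linarith [hζ.2])
    have := min_le_left (f.Fp e x) (f.Fm e (x + (N.tau e : ℝ)) + 1/2)
    linarith

lemma load_nonneg (hfe : f.Feasible) (e : N.E) {θ : ℝ} (hθ : 0 ≤ θ) :
    0 ≤ f.load e θ := by
  have h1 := queue_nonneg hfe e hθ
  have h2 : f.Fm e θ ≤ f.Fm e (θ + (N.tau e : ℝ)) :=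
    f.Fm_mono e (by linarith [tau_one_le (N := N) e])
  unfold load
  unfold queue at h1
  linarith

lemma queue_le_load (hfe : f.Feasible) (e : N.E) (θ : ℝ) :
    f.queue e θ ≤ f.load e θ := by
  have h2 : f.Fm e θ ≤ f.Fm e (θ + (N.tau e : ℝ)) :=
    f.Fm_mono e (by linarith [tau_one_le (N := N) e])
  unfold load queue
  linarith

end Flow

namespace Flow

open intervalIntegral MeasureTheory

variable {N : Network} {f : N.Flow}


lemma sum_fp_ii (s : Finset N.E) (x y : ℝ) :
    IntervalIntegrable (fun t => ∑ e ∈ s, f.fp e t) volume x y := by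
  classical
  induction s using Finset.induction with
  | empty => simpa using intervalIntegrable_const (c := (0:ℝ))
  | @insert e s h ih =>
      have := (f.fp_ii e x y).add ih
      simpa [Finset.sum_insert h] using this

lemma sum_fm_ii (s : Finset N.E) (x y : ℝ) :
    IntervalIntegrable (fun t => ∑ e ∈ s, f.fm e t) volume x y := by
  classical
  induction s using Finset.induction with
  | empty => simpa using intervalIntegrable_const (c := (0:ℝ))
  | @insert e s h ih =>
      have := (f.fm_ii e x y).add ih
      simpa [Finset.sum_insert h] using this

lemma sum_Fp_diff (s : Finset N.E) (x y : ℝ) :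
    ∑ e ∈ s, (f.Fp e y - f.Fp e x) = ∫ t in x..y, ∑ e ∈ s, f.fp e t := by
  rw [intervalIntegral.integral_finset_sum (fun e _ => f.fp_ii e x y)]
  exact Finset.sum_congr rfl fun e _ => f.Fp_diff e x y

lemma sum_Fm_diff (s : Finset N.E) (x y : ℝ) :
    ∑ e ∈ s, (f.Fm e y - f.Fm e x) = ∫ t in x..y, ∑ e ∈ s, f.fm e t := by
  rw [intervalIntegral.integral_finset_sum (fun e _ => f.fm_ii e x y)]
  exact Finset.sum_congr rfl fun e _ => f.Fm_diff e x y

lemma cons_node (hfe : f.Feasible) {v : N.V} (hv : v ≠ N.sink) {x y : ℝ}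
    (hx : 0 ≤ x) (hxy : x ≤ y) :
    ∑ e ∈ N.outEdges v, (f.Fp e y - f.Fp e x) - ∑ e ∈ N.inEdges v, (f.Fm e y - f.Fm e x)
      = ∫ t in x..y, N.u v t := by
  rw [sum_Fp_diff, sum_Fm_diff,
    ← intervalIntegral.integral_sub (f.sum_fp_ii _ x y) (f.sum_fm_ii _ x y)]
  apply intervalIntegral.integral_congr_ae
  filter_upwards [hfe.1 v hv] with t hP ht
  rw [Set.uIoc_of_le hxy] at ht
  exact hP (le_trans hx ht.1.le)

lemma cons_sink (hfe : f.Feasible) {x y : ℝ} (hx : 0 ≤ x) (hxy : x ≤ y) :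
    ∑ e ∈ N.outEdges N.sink, (f.Fp e y - f.Fp e x)
      - ∑ e ∈ N.inEdges N.sink, (f.Fm e y - f.Fm e x) ≤ 0 := by
  rw [sum_Fp_diff, sum_Fm_diff,
    ← intervalIntegral.integral_sub (f.sum_fp_ii _ x y) (f.sum_fm_ii _ x y)]
  have h0 : (∫ _ in x..y, (0:ℝ)) = 0 := intervalIntegral.integral_zero
  rw [← h0]
  apply integral_mono_ae_restrict hxy
  · exact (f.sum_fp_ii _ x y).sub (f.sum_fm_ii _ x y)
  · exact intervalIntegrable_const
  · filter_upwards [ae_Ioo_of_Icc, ae_restrict_of_ae hfe.2.1] with t ht hP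
    exact hP (le_trans hx ht.1.le)

lemma sum_src_fiber (T : Finset N.V) (g : N.E → ℝ) :
    ∑ e ∈ Finset.univ.filter (fun e => N.src e ∈ T), g e
      = ∑ v ∈ T, ∑ e ∈ N.outEdges v, g e := by
  rw [← Finset.sum_fiberwise_of_maps_to (g := N.src)
    (fun e he => (Finset.mem_filter.mp he).2) g]
  apply Finset.sum_congr rfl
  intro v hv
  apply Finset.sum_congr _ (fun _ _ => rfl)
  ext e
  unfold outEdges
  simp only [Finset.mem_filter, Finset.mem_univ, true_and]
  constructor
  · rintro ⟨h1, h2⟩; exact h2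
  · rintro h; exact ⟨h ▸ hv, h⟩

lemma sum_dst_fiber (T : Finset N.V) (g : N.E → ℝ) :
    ∑ e ∈ Finset.univ.filter (fun e => N.dst e ∈ T), g e
      = ∑ v ∈ T, ∑ e ∈ N.inEdges v, g e := by
  rw [← Finset.sum_fiberwise_of_maps_to (g := N.dst)
    (fun e he => (Finset.mem_filter.mp he).2) g]
  apply Finset.sum_congr rfl
  intro v hv
  apply Finset.sum_congr _ (fun _ _ => rfl)
  ext e
  unfold inEdges
  simp only [Finset.mem_filter, Finset.mem_univ, true_and]
  constructor
  · rintro ⟨h1, h2⟩; exact h2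
  · rintro h; exact ⟨h ▸ hv, h⟩

lemma split_src (T : Finset N.V) (g : N.E → ℝ) :
    ∑ e ∈ Finset.univ.filter (fun e => N.src e ∈ T), g e
      = ∑ e ∈ N.edgesIn T, g e + ∑ e ∈ N.deltaPlus T, g e := by
  rw [← Finset.sum_union]
  · apply Finset.sum_congr _ (fun _ _ => rfl)
    ext e
    unfold edgesIn deltaPlus
    simp only [Finset.mem_filter, Finset.mem_univ, true_and, Finset.mem_union]
    tauto
  · rw [Finset.disjoint_left]
    intro e h1 h2
    unfold edgesIn at h1
    unfold deltaPlus at h2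
    simp only [Finset.mem_filter, Finset.mem_univ, true_and] at h1 h2
    exact h2.2 h1.2

lemma split_dst (T : Finset N.V) (g : N.E → ℝ) :
    ∑ e ∈ Finset.univ.filter (fun e => N.dst e ∈ T), g e
      = ∑ e ∈ N.edgesIn T, g e + ∑ e ∈ N.deltaMinus T, g e := by
  rw [← Finset.sum_union]
  · apply Finset.sum_congr _ (fun _ _ => rfl)
    ext e
    unfold edgesIn deltaMinus
    simp only [Finset.mem_filter, Finset.mem_univ, true_and, Finset.mem_union]
    tauto
  · rw [Finset.disjoint_left]
    intro e h1 h2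
    unfold edgesIn at h1
    unfold deltaMinus at h2
    simp only [Finset.mem_filter, Finset.mem_univ, true_and] at h1 h2
    exact h2.1 h1.1

end Flow

namespace Flow

open intervalIntegral MeasureTheory

variable {N : Network} {f : N.Flow}

lemma vol_le (hfe : f.Feasible) (T : Finset N.V) (hT : N.sink ∈ T) {x y : ℝ}
    (hx : 0 ≤ x) (hxy : x ≤ y) :
    ∑ e ∈ N.edgesIn T, f.load e y ≤ ∑ e ∈ N.edgesIn T, f.load e x
      + ∑ e ∈ N.deltaMinus T, (f.Fm e y - f.Fm e x)
      + ∑ v ∈ T.erase N.sink, ∫ t in x..y, N.u v t := by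
  set P : N.E → ℝ := fun e => f.Fp e y - f.Fp e x with hP
  set M : N.E → ℝ := fun e => f.Fm e y - f.Fm e x with hM
  have h1 : ∑ e ∈ N.edgesIn T, P e + ∑ e ∈ N.deltaPlus T, P e
      = ∑ v ∈ T, ∑ e ∈ N.outEdges v, P e := by
    rw [← split_src, sum_src_fiber]
  have h2 : ∑ e ∈ N.edgesIn T, M e + ∑ e ∈ N.deltaMinus T, M e
      = ∑ v ∈ T, ∑ e ∈ N.inEdges v, M e := by
    rw [← split_dst, sum_dst_fiber]
  have h3 : ∑ v ∈ T, (∑ e ∈ N.outEdges v, P e - ∑ e ∈ N.inEdges v, M e)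
      ≤ ∑ v ∈ T.erase N.sink, ∫ t in x..y, N.u v t := by
    rw [← Finset.sum_erase_add _ _ hT]
    have hs : ∑ e ∈ N.outEdges N.sink, P e - ∑ e ∈ N.inEdges N.sink, M e ≤ 0 :=
      cons_sink hfe hx hxy
    have hc : ∑ v ∈ T.erase N.sink, (∑ e ∈ N.outEdges v, P e - ∑ e ∈ N.inEdges v, M e)
        = ∑ v ∈ T.erase N.sink, ∫ t in x..y, N.u v t :=
      Finset.sum_congr rfl fun v hv =>
        cons_node hfe (Finset.ne_of_mem_erase hv) hx hxy
    linarith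
  have h4 : 0 ≤ ∑ e ∈ N.deltaPlus T, P e :=
    Finset.sum_nonneg fun e _ => sub_nonneg.mpr (f.Fp_mono e hxy)
  have h5 : ∑ v ∈ T, (∑ e ∈ N.outEdges v, P e - ∑ e ∈ N.inEdges v, M e)
      = ∑ v ∈ T, ∑ e ∈ N.outEdges v, P e - ∑ v ∈ T, ∑ e ∈ N.inEdges v, M e :=
    Finset.sum_sub_distrib _ _
  have h6 : ∑ e ∈ N.edgesIn T, f.load e y - ∑ e ∈ N.edgesIn T, f.load e x
      = ∑ e ∈ N.edgesIn T, P e - ∑ e ∈ N.edgesIn T, M e := by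
    rw [← Finset.sum_sub_distrib, ← Finset.sum_sub_distrib]
    apply Finset.sum_congr rfl
    intro e _
    unfold P M
    unfold load
    ring
  linarith

end Flow

open intervalIntegral MeasureTheory

variable {N : Network}

/-- Length of a walk, as a natural number. -/
def natLen (N : Network) (p : List N.E) : ℕ := (p.map N.tau).sum

/-- Distance (in physical travel time) to the sink, as a natural number. -/
def ndist (N : Network) (v : N.V) : ℕ := sInf {n : ℕ | ∃ p, N.IsWalk v p ∧ N.natLen p = n}

lemma pathTau_eq_natLen (p : List N.E) : N.pathTau p = (N.natLen p : ℝ) := by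
  unfold pathTau natLen
  induction p with
  | nil => simp
  | cons e p ih => simp only [List.map_cons, List.sum_cons, ih]; push_cast; ring

lemma distSet_ne (hreach : N.Reachable) (v : N.V) :
    {n : ℕ | ∃ p, N.IsWalk v p ∧ N.natLen p = n}.Nonempty := by
  obtain ⟨p, hp⟩ := hreach v
  exact ⟨N.natLen p, p, hp, rfl⟩

lemma ndist_exists (hreach : N.Reachable) (v : N.V) :
    ∃ p, N.IsWalk v p ∧ N.natLen p = N.ndist v :=
  Nat.sInf_mem (distSet_ne hreach v)

lemma ndist_le (v : N.V) (p : List N.E) (h : N.IsWalk v p) : N.ndist v ≤ N.natLen p :=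
  Nat.sInf_le ⟨p, h, rfl⟩

lemma isWalk_nil : N.IsWalk N.sink [] := rfl

lemma ndist_sink : N.ndist N.sink = 0 :=
  Nat.le_zero.mp (ndist_le N.sink [] isWalk_nil)

lemma min_walk_cons (hreach : N.Reachable) {v : N.V} {e : N.E} {p : List N.E}
    (h : N.IsWalk v (e :: p)) (hlen : N.natLen (e :: p) = N.ndist v) :
    N.src e = v ∧ N.IsWalk (N.dst e) p ∧ N.natLen p = N.ndist (N.dst e)
      ∧ N.ndist (N.dst e) + N.tau e = N.ndist v ∧ N.ndist (N.dst e) < N.ndist v := by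
  obtain ⟨hsrc, hw⟩ := h
  have h1 : N.ndist (N.dst e) ≤ N.natLen p := ndist_le _ _ hw
  obtain ⟨q, hq, hqlen⟩ := ndist_exists hreach (N.dst e)
  have h2 : N.ndist v ≤ N.natLen (e :: q) := ndist_le _ _ ⟨hsrc, hq⟩
  have h3 : N.natLen (e :: q) = N.tau e + N.natLen q := by unfold natLen; simp
  have h4 : N.natLen (e :: p) = N.tau e + N.natLen p := by unfold natLen; simp
  have h5 := N.tau_pos e
  refine ⟨hsrc, hw, by omega, by omega, by omega⟩

lemma min_walk_edges (hreach : N.Reachable) :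
    ∀ (p : List N.E) (v : N.V), N.IsWalk v p → N.natLen p = N.ndist v →
    p.Nodup ∧ ∀ e ∈ p, N.ndist (N.dst e) < N.ndist (N.src e)
      ∧ N.ndist (N.src e) ≤ N.ndist v := by
  intro p
  induction p with
  | nil => intro v _ _; exact ⟨List.nodup_nil, by simp⟩
  | cons e p ih =>
    intro v hw hlen
    obtain ⟨hsrc, hw', hlen', hsum, hlt⟩ := min_walk_cons hreach hw hlen
    obtain ⟨hnodup, hmem⟩ := ih (N.dst e) hw' hlen'
    constructor
    · refine List.nodup_cons.mpr ⟨?_, hnodup⟩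
      intro hmem'
      have h1 := (hmem e hmem').1
      have h2 := (hmem e hmem').2
      rw [hsrc] at h1 h2
      omega
    · intro e' he'
      rcases List.mem_cons.mp he' with h | h
      · subst h
        rw [hsrc]
        exact ⟨hlt, le_refl _⟩
      · have h1 := (hmem e' h).1
        have h2 := (hmem e' h).2
        exact ⟨h1, by omega⟩

namespace Flow

variable {f : N.Flow}

/-- Cost of a walk at time `θ`. -/
def wcost (f : N.Flow) (θ : ℝ) (p : List N.E) : ℝ := (p.map fun e => f.c e θ).sum

lemma c_ge_tau (hfe : f.Feasible) (e : N.E) {θ : ℝ} (hθ : 0 ≤ θ) :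
    (N.tau e : ℝ) ≤ f.c e θ := by
  have h1 := queue_nonneg hfe e hθ
  have h2 := nu_pos' (N := N) e
  have : 0 ≤ f.queue e θ / (N.nu e : ℝ) := div_nonneg h1 h2.le
  unfold c
  linarith

lemma c_pos (hfe : f.Feasible) (e : N.E) {θ : ℝ} (hθ : 0 ≤ θ) : 0 < f.c e θ :=
  lt_of_lt_of_le (by linarith [tau_one_le (N := N) e]) (c_ge_tau hfe e hθ)

lemma wcost_ge_pathTau (hfe : f.Feasible) {θ : ℝ} (hθ : 0 ≤ θ) (p : List N.E) :
    N.pathTau p ≤ wcost f θ p := by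
  unfold pathTau wcost
  induction p with
  | nil => simp
  | cons e p ih =>
    simp only [List.map_cons, List.sum_cons]
    have := c_ge_tau hfe e hθ
    linarith

lemma pathTau_nonneg (p : List N.E) : 0 ≤ N.pathTau p := by
  rw [pathTau_eq_natLen]; positivity

lemma wcost_nonneg (hfe : f.Feasible) {θ : ℝ} (hθ : 0 ≤ θ) (p : List N.E) :
    0 ≤ wcost f θ p :=
  le_trans (pathTau_nonneg p) (wcost_ge_pathTau hfe hθ p)

lemma label_bddBelow (hfe : f.Feasible) (v : N.V) {θ : ℝ} (hθ : 0 ≤ θ) :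
    BddBelow {x | ∃ p, N.IsWalk v p ∧ x = wcost f θ p} := by
  refine ⟨0, fun x hx => ?_⟩
  obtain ⟨p, _, rfl⟩ := hx
  exact wcost_nonneg hfe hθ p

lemma label_le (hfe : f.Feasible) {v : N.V} {p : List N.E} {θ : ℝ}
    (hw : N.IsWalk v p) (hθ : 0 ≤ θ) : f.label v θ ≤ wcost f θ p :=
  csInf_le (label_bddBelow hfe v hθ) ⟨p, hw, rfl⟩

lemma label_ge_ndist (hreach : N.Reachable) (hfe : f.Feasible) (v : N.V) {θ : ℝ}
    (hθ : 0 ≤ θ) : (N.ndist v : ℝ) ≤ f.label v θ := by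
  apply le_csInf
  · obtain ⟨p, hp⟩ := hreach v
    exact ⟨wcost f θ p, p, hp, rfl⟩
  · rintro x ⟨p, hp, rfl⟩
    calc (N.ndist v : ℝ) ≤ (N.natLen p : ℝ) := by exact_mod_cast ndist_le v p hp
      _ = N.pathTau p := (pathTau_eq_natLen p).symm
      _ ≤ wcost f θ p := wcost_ge_pathTau hfe hθ p

lemma label_nonneg (hreach : N.Reachable) (hfe : f.Feasible) (v : N.V) {θ : ℝ}
    (hθ : 0 ≤ θ) : 0 ≤ f.label v θ := by
  have := label_ge_ndist hreach hfe v hθ (θ := θ)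
  have h2 : (0:ℝ) ≤ (N.ndist v : ℝ) := by positivity
  linarith

lemma not_active_of_label_lt (hreach : N.Reachable) (hfe : f.Feasible) {e : N.E} {θ : ℝ}
    (hθ : 0 ≤ θ)
    (hbound : f.label (N.src e) θ < (N.ndist (N.dst e) : ℝ) + 1) : ¬ f.Active e θ := by
  intro hA
  unfold Active at hA
  have h1 := label_ge_ndist hreach hfe (N.dst e) hθ
  have h2 := c_ge_tau hfe e hθ
  have h3 := tau_one_le (N := N) e
  rw [hA] at hbound
  linarith

lemma In_zero_of_inactive (hide : f.IsIDE) (e : N.E) {x y : ℝ} (hx : 0 ≤ x) (hxy : x ≤ y)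
    (hinact : ∀ θ ∈ Set.Icc x y, ¬ f.Active e θ) : f.Fp e y - f.Fp e x = 0 := by
  rw [Fp_diff]
  have : (∫ t in x..y, f.fp e t) = ∫ _ in x..y, (0:ℝ) := by
    apply intervalIntegral.integral_congr_ae
    filter_upwards [hide.2 e] with t hP ht
    rw [Set.uIoc_of_le hxy] at ht
    have ht0 : 0 ≤ t := le_trans hx ht.1.le
    by_contra hne
    have hpos : 0 < f.fp e t := lt_of_le_of_ne (f.fp_nonneg e t) (Ne.symm hne)
    exact hinact t ⟨ht.1.le, ht.2⟩ (hP ht0 hpos)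
  rw [this, intervalIntegral.integral_zero]

lemma list_sum_le_finset {g : N.E → ℝ} (hg : ∀ e, 0 ≤ g e) {p : List N.E} (hnd : p.Nodup)
    {s : Finset N.E} (hsub : ∀ e ∈ p, e ∈ s) : (p.map g).sum ≤ ∑ e ∈ s, g e := by
  rw [← List.sum_toFinset _ hnd]
  exact Finset.sum_le_sum_of_subset_of_nonneg
    (fun e he => hsub e (List.mem_toFinset.mp he)) (fun e _ _ => hg e)

lemma wcost_eq (θ : ℝ) (p : List N.E) :
    wcost f θ p = N.pathTau p + (p.map fun e => f.queue e θ / (N.nu e : ℝ)).sum := by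
  unfold wcost pathTau c
  induction p with
  | nil => simp
  | cons e p ih => simp only [List.map_cons, List.sum_cons]; rw [ih]; ring

lemma qdiv_le_load (hfe : f.Feasible) (e : N.E) {θ : ℝ} (hθ : 0 ≤ θ) :
    f.queue e θ / (N.nu e : ℝ) ≤ f.load e θ := by
  have h1 := queue_nonneg hfe e hθ
  have h2 : (1:ℝ) ≤ (N.nu e : ℝ) := by exact_mod_cast N.nu_pos e
  have h3 : f.queue e θ / (N.nu e : ℝ) ≤ f.queue e θ := by
    apply div_le_self h1 h2
  linarith [queue_le_load hfe e θ]

end Flow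

open intervalIntegral MeasureTheory

variable {N : Network}

/-- Edges leading strictly closer to the sink. -/
def closerEdges (N : Network) (v : N.V) : Finset N.E :=
  Finset.univ.filter (fun e => N.src e = v ∧ N.ndist (N.dst e) < N.ndist v)

lemma closer_src {v : N.V} {e : N.E} (h : e ∈ N.closerEdges v) : N.src e = v :=
  ((Finset.mem_filter.mp h).2).1

lemma closer_dist {v : N.V} {e : N.E} (h : e ∈ N.closerEdges v) :
    N.ndist (N.dst e) < N.ndist v :=
  ((Finset.mem_filter.mp h).2).2

lemma mem_closer {v : N.V} {e : N.E} (h1 : N.src e = v)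
    (h2 : N.ndist (N.dst e) < N.ndist v) : e ∈ N.closerEdges v :=
  Finset.mem_filter.mpr ⟨Finset.mem_univ e, h1, h2⟩

lemma closer_nonempty (hreach : N.Reachable) {v : N.V} (hv : v ≠ N.sink) :
    (N.closerEdges v).Nonempty := by
  obtain ⟨p, hp, hlen⟩ := ndist_exists hreach v
  cases p with
  | nil => exact absurd hp hv
  | cons e p' =>
    obtain ⟨hsrc, _, _, _, hlt⟩ := min_walk_cons hreach hp hlen
    exact ⟨e, mem_closer hsrc hlt⟩

/-- Maximal budget of an edge leading strictly closer to the sink. -/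
noncomputable def Mv (N : Network) (v : N.V) : ℝ :=
  if h : (N.closerEdges v).Nonempty then
    ((N.closerEdges v).image (Network.Flow.bud N)).max' (h.image _) else 0

lemma Mv_ge {v : N.V} {e : N.E} (h : e ∈ N.closerEdges v) :
    Network.Flow.bud N e ≤ Mv N v := by
  rw [Mv, dif_pos ⟨e, h⟩]
  exact Finset.le_max' _ _ (Finset.mem_image_of_mem _ h)

lemma Mv_nonneg (v : N.V) : 0 ≤ Mv N v := by
  rw [Mv]
  split
  · rename_i h
    obtain ⟨e, he⟩ := h
    exact le_trans (Network.Flow.bud_pos e).le (by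
      exact Finset.le_max' _ _ (Finset.mem_image_of_mem _ he))
  · exact le_refl 0

lemma Mv_mem {v : N.V} (h : (N.closerEdges v).Nonempty) :
    ∃ e ∈ N.closerEdges v, Network.Flow.bud N e = Mv N v := by
  rw [Mv, dif_pos h]
  obtain ⟨e, he, hb⟩ := Finset.mem_image.mp
    (Finset.max'_mem ((N.closerEdges v).image (Network.Flow.bud N)) (h.image _))
  exact ⟨e, he, hb⟩

/-- Prefix-closed node sets (with respect to distance to the sink). -/
def Pref (N : Network) (T : Finset N.V) : Prop :=
  N.sink ∈ T ∧ ∀ v ∈ T, ∀ w, w ∉ T → N.ndist v ≤ N.ndist w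

lemma sum_Mv_le (hreach : N.Reachable) (A : Finset N.V) (hA : N.sink ∉ A)
    (F : Finset N.E)
    (hd : ∀ v ∈ A, ∀ e ∈ F, N.src e ≠ v ∨ N.ndist v ≤ N.ndist (N.dst e)) :
    ∑ v ∈ A, Mv N v + ∑ e ∈ F, Network.Flow.bud N e
      ≤ ∑ e, Network.Flow.bud N e := by
  rcases isEmpty_or_nonempty N.E with hE | hE
  · have hA0 : A = ∅ := by
      by_contra h
      obtain ⟨v, hv⟩ := Finset.nonempty_iff_ne_empty.mpr h
      obtain ⟨e, _⟩ := closer_nonempty hreach (fun hs => hA (hs ▸ hv))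
      exact hE.elim e
    have hF0 : F = ∅ := Finset.eq_empty_of_isEmpty F
    simp [hA0, hF0]
  · have hg : ∀ v : N.V, ∃ e : N.E, v ≠ N.sink →
        e ∈ N.closerEdges v ∧ Network.Flow.bud N e = Mv N v := by
      intro v
      by_cases hv : v ≠ N.sink
      · obtain ⟨e, he, hb⟩ := Mv_mem (closer_nonempty hreach hv)
        exact ⟨e, fun _ => ⟨he, hb⟩⟩
      · exact ⟨Classical.arbitrary N.E, fun h => absurd h hv⟩
    choose g hgspec using hg
    have hAne : ∀ v ∈ A, v ≠ N.sink := fun v hv hs => hA (hs ▸ hv)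
    have h1 : ∑ v ∈ A, Mv N v = ∑ e ∈ A.image g, Network.Flow.bud N e := by
      rw [Finset.sum_image]
      · exact Finset.sum_congr rfl fun v hv => ((hgspec v (hAne v hv)).2).symm
      · intro x hx y hy hxy
        have hsx := closer_src (hgspec x (hAne x hx)).1
        have hsy := closer_src (hgspec y (hAne y hy)).1
        rw [← hsx, ← hsy, hxy]
    have hdisj : Disjoint (A.image g) F := by
      rw [Finset.disjoint_left]
      rintro e he heF
      obtain ⟨v, hv, rfl⟩ := Finset.mem_image.mp he
      have h2 := hgspec v (hAne v hv)
      rcases hd v hv _ heF with h | h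
      · exact h (closer_src h2.1)
      · exact absurd h (not_le.mpr (closer_dist h2.1))
    rw [h1, ← Finset.sum_union hdisj]
    exact Finset.sum_le_sum_of_subset_of_nonneg (Finset.subset_univ _)
      (fun e _ _ => (Network.Flow.bud_pos e).le)

namespace Flow

variable {f : N.Flow}

/-- The sink-like quantity of a node set over `[a, β]`. -/
noncomputable def sig (f : N.Flow) (a β : ℝ) (T : Finset N.V) : ℝ :=
  ∑ e ∈ N.edgesIn T, f.load e a + ∑ e ∈ N.deltaMinus T, (f.Fm e β - f.Fm e a)
    + ∑ v ∈ T.erase N.sink, ∫ t in a..β, N.u v t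

lemma sig_ge_sub (hfe : f.Feasible) {a β : ℝ} (ha : 0 ≤ a) (hβ : a ≤ β)
    (T : Finset N.V) {s : Finset N.E} (hs : s ⊆ N.deltaMinus T) :
    ∑ e ∈ s, (f.Fm e β - f.Fm e a) ≤ sig f a β T := by
  unfold sig
  have h1 : 0 ≤ ∑ e ∈ N.edgesIn T, f.load e a :=
    Finset.sum_nonneg fun e _ => load_nonneg hfe e ha
  have h2 : 0 ≤ ∑ v ∈ T.erase N.sink, ∫ t in a..β, N.u v t :=
    Finset.sum_nonneg fun v _ => U_mono (N := N) v hβ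
  have h3 : ∑ e ∈ s, (f.Fm e β - f.Fm e a)
      ≤ ∑ e ∈ N.deltaMinus T, (f.Fm e β - f.Fm e a) :=
    Finset.sum_le_sum_of_subset_of_nonneg hs
      (fun e _ _ => sub_nonneg.mpr (f.Fm_mono e hβ))
  linarith

lemma sig_ge_term (hfe : f.Feasible) {a β : ℝ} (ha : 0 ≤ a) (hβ : a ≤ β)
    (T : Finset N.V) {e₀ : N.E} (he₀ : e₀ ∈ N.deltaMinus T) :
    f.Fm e₀ β - f.Fm e₀ a ≤ sig f a β T := by
  have := sig_ge_sub (f := f) hfe ha hβ T (s := {e₀})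
    (Finset.singleton_subset_iff.mpr he₀)
  simpa using this

end Flow

namespace Flow

open intervalIntegral MeasureTheory

variable {N : Network} {f : N.Flow}

lemma u_ii (v : N.V) (x y : ℝ) : IntervalIntegrable (N.u v) volume x y :=
  (N.u_integrable v).intervalIntegrable

lemma U_le (v : N.V) {x y z : ℝ} (hxy : x ≤ y) (hyz : y ≤ z) :
    (∫ t in x..y, N.u v t) ≤ ∫ t in x..z, N.u v t := by
  have h := integral_add_adjacent_intervals (u_ii (N := N) v x y) (u_ii (N := N) v y z)
  have h2 : 0 ≤ ∫ t in y..z, N.u v t :=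
    integral_nonneg hyz fun t _ => N.u_nonneg v t
  linarith

set_option maxHeartbeats 1000000 in
lemma step_lemma (hreach : N.Reachable) (hide : f.IsIDE) {a b : ℝ} (ha : 0 ≤ a)
    (hlen : ∑ e, bud N e ≤ b - a)
    (T : Finset N.V) (hPref : N.Pref T)
    (v₀ : N.V) (hv₀ : v₀ ∉ T)
    (hmin : ∀ w, w ∉ T → N.ndist v₀ ≤ N.ndist w)
    (IH : sig f a (b - ∑ v ∈ T.erase N.sink, Mv N v) T < 1/2) :
    sig f a (b - ∑ v ∈ (insert v₀ T).erase N.sink, Mv N v) (insert v₀ T) < 1/2 := by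
  classical
  have hfe : f.Feasible := hide.1
  have hsinkT : N.sink ∈ T := hPref.1
  have hv₀s : v₀ ≠ N.sink := fun h => hv₀ (h ▸ hsinkT)
  set S := ∑ e, bud N e with hS
  set βk := b - ∑ v ∈ T.erase N.sink, Mv N v with hβk
  have hins : (insert v₀ T).erase N.sink = insert v₀ (T.erase N.sink) :=
    Finset.erase_insert_of_ne hv₀s
  have hnotmem : v₀ ∉ T.erase N.sink := fun h => hv₀ (Finset.mem_of_mem_erase h)
  have hsum' : ∑ v ∈ (insert v₀ T).erase N.sink, Mv N v
      = Mv N v₀ + ∑ v ∈ T.erase N.sink, Mv N v := by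
    rw [hins, Finset.sum_insert hnotmem]
  set β' := βk - Mv N v₀ with hβ'
  have hgoalβ : b - ∑ v ∈ (insert v₀ T).erase N.sink, Mv N v = β' := by
    rw [hsum']; unfold β' βk; ring
  rw [hgoalβ]
  -- membership in T from small distance
  have hmemT : ∀ w, N.ndist w < N.ndist v₀ → w ∈ T := by
    intro w hw
    by_contra h
    exact absurd (hmin w h) (not_le.mpr hw)
  -- budget numerics
  have hsink' : N.sink ∉ T.erase N.sink := Finset.notMem_erase _ _
  have hsink'' : N.sink ∉ (insert v₀ T).erase N.sink := Finset.notMem_erase _ _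
  have hbud0 : ∑ v ∈ (insert v₀ T).erase N.sink, Mv N v + ∑ e ∈ (∅ : Finset N.E), bud N e ≤ S :=
    sum_Mv_le hreach _ hsink'' ∅ (by simp)
  have n0 : a ≤ β' := by
    simp only [Finset.sum_empty, add_zero] at hbud0
    rw [hsum'] at hbud0
    unfold β' βk
    linarith
  have n2 : ∀ e, N.dst e = v₀ → a + bud N e ≤ β' := by
    intro e he
    have h1 : ∑ v ∈ (insert v₀ T).erase N.sink, Mv N v + ∑ e' ∈ ({e} : Finset N.E), bud N e' ≤ S := by
      apply sum_Mv_le hreach _ hsink''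
      intro v hv e' he'
      rw [Finset.mem_singleton] at he'
      subst he'
      right
      rw [he]
      rw [hins] at hv
      rcases Finset.mem_insert.mp hv with rfl | hv
      · exact le_refl _
      · exact hPref.2 v (Finset.mem_of_mem_erase hv) v₀ hv₀
    rw [Finset.sum_singleton, hsum'] at h1
    unfold β' βk
    linarith
  have n3 : ∀ e, N.src e = v₀ → a + bud N e ≤ βk := by
    intro e he
    have h1 : ∑ v ∈ T.erase N.sink, Mv N v + ∑ e' ∈ ({e} : Finset N.E), bud N e' ≤ S := by
      apply sum_Mv_le hreach _ hsink'
      intro v hv e' he'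
      rw [Finset.mem_singleton] at he'
      subst he'
      left
      rw [he]
      intro hcon
      exact hv₀ (hcon ▸ Finset.mem_of_mem_erase hv)
    rw [Finset.sum_singleton] at h1
    unfold βk
    linarith
  have hβ'βk : β' ≤ βk := by
    have := Mv_nonneg (N := N) v₀
    unfold β'
    linarith
  have haβk : a ≤ βk := le_trans n0 hβ'βk
  have n4 : ∀ e ∈ N.closerEdges v₀, ∀ θ : ℝ, θ ≤ β' → θ + bud N e ≤ βk := by
    intro e he θ hθ
    have := Mv_ge he
    unfold β' at hθ
    linarith
  -- d1 : volume bound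
  have d1 : ∀ θ, a ≤ θ → θ ≤ βk → ∑ e ∈ N.edgesIn T, f.load e θ ≤ sig f a βk T := by
    intro θ hθa hθβ
    have h1 := vol_le hfe T hsinkT ha hθa
    have h2 : ∑ e ∈ N.deltaMinus T, (f.Fm e θ - f.Fm e a)
        ≤ ∑ e ∈ N.deltaMinus T, (f.Fm e βk - f.Fm e a) :=
      Finset.sum_le_sum fun e _ => by linarith [f.Fm_mono e hθβ]
    have h3 : ∑ v ∈ T.erase N.sink, (∫ t in a..θ, N.u v t)
        ≤ ∑ v ∈ T.erase N.sink, ∫ t in a..βk, N.u v t :=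
      Finset.sum_le_sum fun v _ => U_le (N := N) v hθa hθβ
    unfold sig
    linarith
  -- d2 : queue bound
  have d2 : ∀ e ∈ N.deltaMinus T, ∀ θ, a ≤ θ → θ + bud N e ≤ βk → f.queue e θ < 1/2 := by
    intro e he θ hθa hwin
    by_contra hcon
    push_neg at hcon
    have hθ0 : (0:ℝ) ≤ θ := le_trans ha hθa
    have hd := q_half_drain hfe e hθ0 hcon
    have hb : θ + 1 / (2 * (N.nu e : ℝ)) + (N.tau e : ℝ) = θ + bud N e := by
      unfold bud; ring
    rw [hb] at hd
    have h1 : f.Fm e (θ + bud N e) ≤ f.Fm e βk := f.Fm_mono e hwin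
    have h2 : f.Fm e a ≤ f.Fm e (θ + (N.tau e : ℝ)) :=
      f.Fm_mono e (by linarith [tau_one_le (N := N) e])
    have h3 : (1:ℝ)/2 ≤ f.Fm e βk - f.Fm e a := by linarith
    have h4 := sig_ge_term hfe ha haβk T he
    linarith
  -- closer edges are in deltaMinus T
  have hclδ : ∀ e ∈ N.closerEdges v₀, e ∈ N.deltaMinus T := by
    intro e he
    unfold deltaMinus
    rw [Finset.mem_filter]
    refine ⟨Finset.mem_univ _, ?_, hmemT _ (closer_dist he)⟩
    rw [closer_src he]
    exact hv₀
  -- d4 : label bound at v₀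
  have d4 : ∀ θ, a ≤ θ → θ ≤ β' → f.label v₀ θ < (N.ndist v₀ : ℝ) + 1 := by
    intro θ hθa hθβ
    have hθ0 : (0:ℝ) ≤ θ := le_trans ha hθa
    obtain ⟨p, hp, hplen⟩ := ndist_exists hreach v₀
    cases p with
    | nil => exact absurd hp hv₀s
    | cons e₁ p' =>
      obtain ⟨hsrc, hw', hlen', hsum1, hlt⟩ := min_walk_cons hreach hp hplen
      have he₁ : e₁ ∈ N.closerEdges v₀ := mem_closer hsrc hlt
      have hq₁ : f.queue e₁ θ < 1/2 := d2 e₁ (hclδ e₁ he₁) θ hθa (n4 e₁ he₁ θ hθβ)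
      obtain ⟨hnd, hmem⟩ := min_walk_edges hreach p' (N.dst e₁) hw' hlen'
      have hsubT : ∀ e ∈ p', e ∈ N.edgesIn T := by
        intro e he
        have h1 := (hmem e he).1
        have h2 := (hmem e he).2
        unfold edgesIn
        rw [Finset.mem_filter]
        exact ⟨Finset.mem_univ _, hmemT _ (by omega), hmemT _ (by omega)⟩
      have hlab : f.label v₀ θ ≤ wcost f θ (e₁ :: p') := label_le hfe hp hθ0
      have hwc : wcost f θ (e₁ :: p') = f.c e₁ θ + wcost f θ p' := by
        unfold wcost; simp
      have hwcp : wcost f θ p' = N.pathTau p'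
          + (p'.map fun e => f.queue e θ / (N.nu e : ℝ)).sum := wcost_eq θ p'
      have hsum2 : (p'.map fun e => f.queue e θ / (N.nu e : ℝ)).sum
          ≤ ∑ e ∈ N.edgesIn T, (f.queue e θ / (N.nu e : ℝ)) := by
        apply list_sum_le_finset _ hnd hsubT
        intro e
        exact div_nonneg (queue_nonneg hfe e hθ0) (nu_pos' (N := N) e).le
      have hsum3 : ∑ e ∈ N.edgesIn T, (f.queue e θ / (N.nu e : ℝ))
          ≤ ∑ e ∈ N.edgesIn T, f.load e θ :=
        Finset.sum_le_sum fun e _ => qdiv_le_load hfe e hθ0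
      have hvol := d1 θ hθa (le_trans hθβ hβ'βk)
      have hc₁ : f.c e₁ θ ≤ (N.tau e₁ : ℝ) + f.queue e₁ θ := by
        unfold c
        have h1 := queue_nonneg hfe e₁ hθ0
        have h2 : (1:ℝ) ≤ (N.nu e₁ : ℝ) := by exact_mod_cast N.nu_pos e₁
        have := div_le_self h1 h2
        linarith
      have hpt : N.pathTau p' = (N.ndist (N.dst e₁) : ℝ) := by
        rw [pathTau_eq_natLen, hlen']
      have hcast : (N.ndist (N.dst e₁) : ℝ) + (N.tau e₁ : ℝ) = (N.ndist v₀ : ℝ) := by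
        exact_mod_cast congrArg (Nat.cast : ℕ → ℝ) hsum1
      calc f.label v₀ θ ≤ f.c e₁ θ + wcost f θ p' := by rw [← hwc]; exact hlab
        _ < (N.ndist v₀ : ℝ) + 1 := by
            rw [hwcp, hpt]
            linarith [IH, le_trans (le_trans hsum2 hsum3) hvol]
  -- d5 : no inflow into non-closer out-edges of v₀
  have d5 : ∀ e, N.src e = v₀ → ¬(N.ndist (N.dst e) < N.ndist v₀) →
      f.Fp e β' - f.Fp e a = 0 := by
    intro e hesrc hecl
    apply In_zero_of_inactive hide e ha n0
    intro θ hθ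
    apply not_active_of_label_lt hreach hfe (le_trans ha hθ.1)
    rw [hesrc]
    calc f.label v₀ θ < (N.ndist v₀ : ℝ) + 1 := d4 θ hθ.1 hθ.2
      _ ≤ (N.ndist (N.dst e) : ℝ) + 1 := by
          have : N.ndist v₀ ≤ N.ndist (N.dst e) := by omega
          have : (N.ndist v₀ : ℝ) ≤ (N.ndist (N.dst e) : ℝ) := by exact_mod_cast this
          linarith
  -- d6 : conservation at v₀
  have d6 : ∑ e ∈ N.closerEdges v₀, (f.Fp e β' - f.Fp e a)
      = ∑ e ∈ N.inEdges v₀, (f.Fm e β' - f.Fm e a) + ∫ t in a..β', N.u v₀ t := by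
    have hcons := cons_node hfe hv₀s ha n0
    have hsplit : N.outEdges v₀ = N.closerEdges v₀
        ∪ (N.outEdges v₀).filter (fun e => ¬(N.ndist (N.dst e) < N.ndist v₀)) := by
      ext e
      unfold outEdges closerEdges
      simp only [Finset.mem_filter, Finset.mem_univ, true_and, Finset.mem_union]
      by_cases h : N.ndist (N.dst e) < N.ndist v₀ <;> tauto
    have hdisj : Disjoint (N.closerEdges v₀)
        ((N.outEdges v₀).filter (fun e => ¬(N.ndist (N.dst e) < N.ndist v₀))) := by
      rw [Finset.disjoint_left]
      intro e h1 h2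
      exact (Finset.mem_filter.mp h2).2 (closer_dist h1)
    have hzero : ∑ e ∈ (N.outEdges v₀).filter
        (fun e => ¬(N.ndist (N.dst e) < N.ndist v₀)), (f.Fp e β' - f.Fp e a) = 0 := by
      apply Finset.sum_eq_zero
      intro e he
      rw [Finset.mem_filter] at he
      exact d5 e (Finset.mem_filter.mp he.1).2 he.2
    rw [hsplit, Finset.sum_union hdisj, hzero, add_zero] at hcons
    linarith
  -- d7 : clearing of closer edges
  have d7 : ∀ e ∈ N.closerEdges v₀, f.Fp e β' - f.Fm e a ≤ f.Fm e βk - f.Fm e a := by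
    intro e he
    have hβ'0 : (0:ℝ) ≤ β' := le_trans ha n0
    have hcap := capped_clear hfe e hβ'0
    have hmono : f.Fm e (β' + bud N e) ≤ f.Fm e βk :=
      f.Fm_mono e (n4 e he β' (le_refl _))
    by_cases hc : f.Fp e β' ≤ f.Fm e (β' + (N.tau e : ℝ)) + 1/2
    · have : min (f.Fp e β') (f.Fm e (β' + (N.tau e : ℝ)) + 1/2) = f.Fp e β' :=
        min_eq_left hc
      rw [this] at hcap
      linarith
    · exfalso
      push_neg at hc
      have : min (f.Fp e β') (f.Fm e (β' + (N.tau e : ℝ)) + 1/2)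
          = f.Fm e (β' + (N.tau e : ℝ)) + 1/2 := min_eq_right hc.le
      rw [this] at hcap
      have h2 : f.Fm e a ≤ f.Fm e (β' + (N.tau e : ℝ)) :=
        f.Fm_mono e (by linarith [tau_one_le (N := N) e])
      have h3 := sig_ge_term hfe ha haβk T (hclδ e he)
      linarith
  -- d8pre : total inflow into v₀ is less than 1/2
  have d8pre : ∑ e ∈ N.inEdges v₀, (f.Fm e β' - f.Fm e a) < 1/2 := by
    have h1 : ∑ e ∈ N.closerEdges v₀, (f.Fp e β' - f.Fp e a)
        ≤ ∑ e ∈ N.closerEdges v₀, (f.Fp e β' - f.Fm e a) :=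
      Finset.sum_le_sum fun e _ => by
        have := load_nonneg hfe e ha
        unfold load at this
        linarith
    have h2 : ∑ e ∈ N.closerEdges v₀, (f.Fp e β' - f.Fm e a)
        ≤ ∑ e ∈ N.closerEdges v₀, (f.Fm e βk - f.Fm e a) :=
      Finset.sum_le_sum fun e he => d7 e he
    have h3 : ∑ e ∈ N.closerEdges v₀, (f.Fm e βk - f.Fm e a) ≤ sig f a βk T :=
      sig_ge_sub hfe ha haβk T (fun e he => hclδ e he)
    have h4 : 0 ≤ ∫ t in a..β', N.u v₀ t :=
      integral_nonneg n0 fun t _ => N.u_nonneg v₀ t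
    linarith
  -- d8 : R-clear
  have d8 : ∀ e, N.dst e = v₀ → f.load e a ≤ f.Fm e β' - f.Fm e a := by
    intro e he
    have hcap := capped_clear hfe e ha
    have hmono : f.Fm e (a + bud N e) ≤ f.Fm e β' := f.Fm_mono e (n2 e he)
    by_cases hc : f.Fp e a ≤ f.Fm e (a + (N.tau e : ℝ)) + 1/2
    · rw [min_eq_left hc] at hcap
      have h2 : f.Fm e a ≤ f.Fp e a := by
        have := load_nonneg hfe e ha; unfold load at this; linarith
      unfold load
      linarith
    · exfalso
      push_neg at hc
      rw [min_eq_right hc.le] at hcap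
      have h2 : f.Fm e a ≤ f.Fm e (a + (N.tau e : ℝ)) :=
        f.Fm_mono e (by linarith [tau_one_le (N := N) e])
      have h3 : f.Fm e β' - f.Fm e a
          ≤ ∑ e' ∈ N.inEdges v₀, (f.Fm e' β' - f.Fm e' a) := by
        apply Finset.single_le_sum (f := fun e' => f.Fm e' β' - f.Fm e' a)
          (fun e' _ => sub_nonneg.mpr (f.Fm_mono e' n0))
        unfold inEdges
        rw [Finset.mem_filter]
        exact ⟨Finset.mem_univ _, he⟩
      linarith
  -- d9 : tie-edge clear
  have d9 : ∀ e, N.src e = v₀ → N.dst e ∈ T → f.load e a ≤ f.Fm e βk - f.Fm e a := by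
    intro e hesrc hedst
    have heδ : e ∈ N.deltaMinus T := by
      unfold deltaMinus
      rw [Finset.mem_filter]
      exact ⟨Finset.mem_univ _, hesrc ▸ hv₀, hedst⟩
    have hcap := capped_clear hfe e ha
    have hmono : f.Fm e (a + bud N e) ≤ f.Fm e βk := f.Fm_mono e (n3 e hesrc)
    by_cases hc : f.Fp e a ≤ f.Fm e (a + (N.tau e : ℝ)) + 1/2
    · rw [min_eq_left hc] at hcap
      have h2 : f.Fm e a ≤ f.Fp e a := by
        have := load_nonneg hfe e ha; unfold load at this; linarith
      unfold load
      linarith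
    · exfalso
      push_neg at hc
      rw [min_eq_right hc.le] at hcap
      have h2 : f.Fm e a ≤ f.Fm e (a + (N.tau e : ℝ)) :=
        f.Fm_mono e (by linarith [tau_one_le (N := N) e])
      have h3 := sig_ge_term hfe ha haβk T heδ
      linarith
  -- edge set partition
  set Ecl := N.closerEdges v₀ with hEcl
  set TIE := Finset.univ.filter
    (fun e => N.src e = v₀ ∧ N.dst e ∈ T ∧ ¬(N.ndist (N.dst e) < N.ndist v₀)) with hTIE
  set Rv := Finset.univ.filter
    (fun e => N.dst e = v₀ ∧ (N.src e = v₀ ∨ N.src e ∈ T)) with hRv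
  set Yy := Finset.univ.filter
    (fun e => ¬N.src e = v₀ ∧ N.src e ∉ T ∧ N.dst e ∈ T) with hYy
  set Ww := Finset.univ.filter
    (fun e => ¬N.src e = v₀ ∧ N.src e ∉ T ∧ N.dst e = v₀) with hWw
  have memEcl : ∀ e : N.E, e ∈ Ecl ↔ N.src e = v₀ ∧ N.ndist (N.dst e) < N.ndist v₀ := by
    intro e
    rw [hEcl]
    unfold closerEdges
    simp [Finset.mem_filter]
  have habs1 : ∀ e : N.E, N.src e = v₀ → N.src e ∈ T → False :=
    fun e h1 h2 => hv₀ (h1 ▸ h2)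
  have habs2 : ∀ e : N.E, N.dst e = v₀ → N.dst e ∈ T → False :=
    fun e h1 h2 => hv₀ (h1 ▸ h2)
  have E1 : N.edgesIn (insert v₀ T) = ((N.edgesIn T ∪ Ecl) ∪ TIE) ∪ Rv := by
    ext e
    have hc := hmemT (N.dst e)
    have h1 := habs1 e
    have h2 := habs2 e
    unfold edgesIn
    simp only [Finset.mem_union, Finset.mem_filter, Finset.mem_univ, true_and,
      Finset.mem_insert, memEcl, hTIE, hRv]
    tauto
  have E2 : N.deltaMinus (insert v₀ T) = Yy ∪ Ww := by
    ext e
    have h2 := habs2 e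
    unfold deltaMinus
    simp only [Finset.mem_union, Finset.mem_filter, Finset.mem_univ, true_and,
      Finset.mem_insert, hYy, hWw]
    tauto
  have E3 : N.deltaMinus T = (Ecl ∪ TIE) ∪ Yy := by
    ext e
    have hc := hmemT (N.dst e)
    have h1 := habs1 e
    unfold deltaMinus
    simp only [Finset.mem_union, Finset.mem_filter, Finset.mem_univ, true_and,
      memEcl, hTIE, hYy]
    tauto
  have E4 : N.inEdges v₀ = Rv ∪ Ww := by
    ext e
    unfold inEdges
    simp only [Finset.mem_union, Finset.mem_filter, Finset.mem_univ, true_and, hRv, hWw]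
    tauto
  -- disjointness
  have dj1 : Disjoint (N.edgesIn T) Ecl := by
    rw [Finset.disjoint_left]
    intro e he1 he2
    unfold edgesIn at he1
    exact habs1 e ((memEcl e).mp he2).1 (Finset.mem_filter.mp he1).2.1
  have dj2 : Disjoint (N.edgesIn T ∪ Ecl) TIE := by
    rw [Finset.disjoint_left]
    intro e he1 he2
    rw [hTIE, Finset.mem_filter] at he2
    rcases Finset.mem_union.mp he1 with h | h
    · unfold edgesIn at h
      exact habs1 e he2.2.1 (Finset.mem_filter.mp h).2.1
    · exact he2.2.2.2 ((memEcl e).mp h).2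
  have dj3 : Disjoint ((N.edgesIn T ∪ Ecl) ∪ TIE) Rv := by
    rw [Finset.disjoint_left]
    intro e he1 he2
    rw [hRv, Finset.mem_filter] at he2
    rcases Finset.mem_union.mp he1 with h | h
    · rcases Finset.mem_union.mp h with h' | h'
      · unfold edgesIn at h'
        exact habs2 e he2.2.1 (Finset.mem_filter.mp h').2.2
      · exact habs2 e he2.2.1 (hmemT _ ((memEcl e).mp h').2)
    · rw [hTIE, Finset.mem_filter] at h
      exact habs2 e he2.2.1 h.2.2.1
  have dj4 : Disjoint Yy Ww := by
    rw [Finset.disjoint_left]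
    intro e he1 he2
    rw [hYy, Finset.mem_filter] at he1
    rw [hWw, Finset.mem_filter] at he2
    exact habs2 e he2.2.2.2 he1.2.2.2
  have dj5 : Disjoint Ecl TIE := by
    rw [Finset.disjoint_left]
    intro e he1 he2
    rw [hTIE, Finset.mem_filter] at he2
    exact he2.2.2.2 ((memEcl e).mp he1).2
  have dj6 : Disjoint (Ecl ∪ TIE) Yy := by
    rw [Finset.disjoint_left]
    intro e he1 he2
    rw [hYy, Finset.mem_filter] at he2
    rcases Finset.mem_union.mp he1 with h | h
    · exact he2.2.1 ((memEcl e).mp h).1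
    · rw [hTIE, Finset.mem_filter] at h
      exact he2.2.1 h.2.1
  have dj7 : Disjoint Rv Ww := by
    rw [Finset.disjoint_left]
    intro e he1 he2
    rw [hRv, Finset.mem_filter] at he1
    rw [hWw, Finset.mem_filter] at he2
    rcases he1.2.2 with h | h
    · exact he2.2.1 h
    · exact he2.2.2.1 h
  -- expand sig of the larger set
  have hsig' : sig f a β' (insert v₀ T)
      = ∑ e ∈ N.edgesIn T, f.load e a
        + (∑ e ∈ Ecl, f.load e a + ∑ e ∈ TIE, f.load e a + ∑ e ∈ Rv, f.load e a)
        + (∑ e ∈ Yy, (f.Fm e β' - f.Fm e a) + ∑ e ∈ Ww, (f.Fm e β' - f.Fm e a))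
        + ((∑ v ∈ T.erase N.sink, ∫ t in a..β', N.u v t) + ∫ t in a..β', N.u v₀ t) := by
    unfold sig
    rw [E1, E2, Finset.sum_union dj3, Finset.sum_union dj2, Finset.sum_union dj1,
      Finset.sum_union dj4, hins, Finset.sum_insert hnotmem]
    abel
  have hsigT : sig f a βk T
      = ∑ e ∈ N.edgesIn T, f.load e a
        + (∑ e ∈ Ecl, (f.Fm e βk - f.Fm e a) + ∑ e ∈ TIE, (f.Fm e βk - f.Fm e a)
          + ∑ e ∈ Yy, (f.Fm e βk - f.Fm e a))
        + ∑ v ∈ T.erase N.sink, ∫ t in a..βk, N.u v t := by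
    unfold sig
    rw [E3, Finset.sum_union dj6, Finset.sum_union dj5]
  -- bounds
  have B1 : ∑ e ∈ Rv, f.load e a ≤ ∑ e ∈ Rv, (f.Fm e β' - f.Fm e a) :=
    Finset.sum_le_sum fun e he => d8 e (by
      rw [hRv, Finset.mem_filter] at he; exact he.2.1)
  have B2 : ∑ e ∈ Rv, (f.Fm e β' - f.Fm e a) + ∑ e ∈ Ww, (f.Fm e β' - f.Fm e a)
      = ∑ e ∈ N.inEdges v₀, (f.Fm e β' - f.Fm e a) := by
    rw [E4, Finset.sum_union dj7]
  have B4 : ∑ e ∈ Ecl, f.load e a + ∑ e ∈ Ecl, (f.Fp e β' - f.Fp e a)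
      = ∑ e ∈ Ecl, (f.Fp e β' - f.Fm e a) := by
    rw [← Finset.sum_add_distrib]
    apply Finset.sum_congr rfl
    intro e _
    unfold load
    ring
  have B4' : ∑ e ∈ Ecl, (f.Fp e β' - f.Fm e a) ≤ ∑ e ∈ Ecl, (f.Fm e βk - f.Fm e a) :=
    Finset.sum_le_sum fun e he => d7 e he
  have B5 : ∑ e ∈ TIE, f.load e a ≤ ∑ e ∈ TIE, (f.Fm e βk - f.Fm e a) :=
    Finset.sum_le_sum fun e he => by
      rw [hTIE, Finset.mem_filter] at he
      exact d9 e he.2.1 he.2.2.1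
  have B6 : ∑ e ∈ Yy, (f.Fm e β' - f.Fm e a) ≤ ∑ e ∈ Yy, (f.Fm e βk - f.Fm e a) :=
    Finset.sum_le_sum fun e _ => by linarith [f.Fm_mono e hβ'βk]
  have B7 : ∑ v ∈ T.erase N.sink, (∫ t in a..β', N.u v t)
      ≤ ∑ v ∈ T.erase N.sink, ∫ t in a..βk, N.u v t :=
    Finset.sum_le_sum fun v _ => U_le (N := N) v n0 hβ'βk
  rw [hsig']
  rw [hsigT] at IH
  linarith [B1, B2, d6, B4, B4', B5, B6, B7]


end Flow

namespace Flow

open intervalIntegral MeasureTheory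

variable {N : Network} {f : N.Flow}

lemma not_active_self (hreach : N.Reachable) (hfe : f.Feasible) {e : N.E} {θ : ℝ}
    (h : N.src e = N.dst e) (hθ : 0 ≤ θ) : ¬ f.Active e θ := by
  intro hA
  unfold Active at hA
  rw [h] at hA
  have h1 := c_ge_tau hfe e hθ
  have h2 := tau_one_le (N := N) e
  linarith

lemma base_case (hreach : N.Reachable) (hide : f.IsIDE) {a b : ℝ} (ha : 0 ≤ a)
    (hab : a ≤ b)
    (hin : ∑ e ∈ N.inEdges N.sink, (f.Fm e b - f.Fm e a) < 1/2) :
    sig f a b ({N.sink} : Finset N.V) < 1/2 := by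
  have hfe : f.Feasible := hide.1
  unfold sig
  have h1 : ∀ e ∈ N.edgesIn ({N.sink} : Finset N.V), f.load e a = 0 := by
    intro e he
    unfold edgesIn at he
    rw [Finset.mem_filter] at he
    have hsrc : N.src e = N.sink := Finset.mem_singleton.mp he.2.1
    have hdst : N.dst e = N.sink := Finset.mem_singleton.mp he.2.2
    have hself : N.src e = N.dst e := hsrc.trans hdst.symm
    have hFp : f.Fp e a = 0 := by
      have := In_zero_of_inactive hide e (le_refl (0:ℝ)) ha
        (fun θ hθ => not_active_self hreach hfe hself hθ.1)
      have h0 := f.Fp_zero e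
      linarith
    have hFm : f.Fm e a = 0 := by
      rcases le_or_gt a (N.tau e : ℝ) with h | h
      · exact Fm_zero_of_le hfe e h
      · have h3 : (0:ℝ) ≤ a - (N.tau e : ℝ) := by linarith
        have hq := queue_nonneg hfe e h3
        have hFp2 : f.Fp e (a - (N.tau e : ℝ)) = 0 := by
          have := In_zero_of_inactive hide e (le_refl (0:ℝ)) h3
            (fun θ hθ => not_active_self hreach hfe hself hθ.1)
          have h0 := f.Fp_zero e
          linarith
        have : a - (N.tau e : ℝ) + (N.tau e : ℝ) = a := by ring
        unfold queue at hq
        rw [this, hFp2] at hq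
        have := f.Fm_nonneg e (le_trans (by norm_num) ha)
        linarith
    unfold load
    rw [hFp, hFm]
    ring
  rw [Finset.sum_congr rfl h1]
  simp only [Finset.sum_const, smul_zero, Finset.erase_singleton, Finset.sum_empty]
  have h2 : ∑ e ∈ N.deltaMinus ({N.sink} : Finset N.V), (f.Fm e b - f.Fm e a)
      ≤ ∑ e ∈ N.inEdges N.sink, (f.Fm e b - f.Fm e a) := by
    apply Finset.sum_le_sum_of_subset_of_nonneg
    · intro e he
      unfold deltaMinus at he
      rw [Finset.mem_filter] at he
      unfold inEdges
      rw [Finset.mem_filter]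
      exact ⟨Finset.mem_univ _, Finset.mem_singleton.mp he.2.2⟩
    · intro e _ _
      exact sub_nonneg.mpr (f.Fm_mono e hab)
  simp only [smul_eq_mul, mul_zero, zero_add, add_zero]
  linarith

lemma all_pref (hreach : N.Reachable) (hide : f.IsIDE) {a b : ℝ} (ha : 0 ≤ a)
    (hlen : ∑ e, bud N e ≤ b - a)
    (hin : ∑ e ∈ N.inEdges N.sink, (f.Fm e b - f.Fm e a) < 1/2) :
    ∀ n (T : Finset N.V), N.Pref T → T.card = n →
      sig f a (b - ∑ v ∈ T.erase N.sink, Mv N v) T < 1/2 := by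
  have hS0 : 0 ≤ ∑ e, bud N e := Finset.sum_nonneg fun e _ => (bud_pos e).le
  have hab : a ≤ b := by linarith
  intro n
  induction n with
  | zero =>
    intro T hPref hcard
    rw [Finset.card_eq_zero] at hcard
    exact absurd (hcard ▸ hPref.1) (Finset.notMem_empty _)
  | succ n ih =>
    intro T hPref hcard
    by_cases hT : T = {N.sink}
    · subst hT
      rw [Finset.erase_singleton, Finset.sum_empty, sub_zero]
      exact base_case hreach hide ha hab hin
    · have hne : (T.erase N.sink).Nonempty := by
        rw [Finset.nonempty_iff_ne_empty]
        intro h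
        apply hT
        apply Finset.eq_singleton_iff_unique_mem.mpr
        refine ⟨hPref.1, fun x hx => ?_⟩
        by_contra hx'
        exact Finset.notMem_empty x (h ▸ Finset.mem_erase.mpr ⟨hx', hx⟩)
      obtain ⟨v, hv, hvmax⟩ := Finset.exists_max_image (T.erase N.sink) N.ndist hne
      have hvT : v ∈ T := Finset.mem_of_mem_erase hv
      have hvs : v ≠ N.sink := Finset.ne_of_mem_erase hv
      set T₀ := T.erase v with hT₀
      have hsink₀ : N.sink ∈ T₀ := Finset.mem_erase.mpr ⟨(Ne.symm hvs), hPref.1⟩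
      have hPref₀ : N.Pref T₀ := by
        refine ⟨hsink₀, fun u hu w hw => ?_⟩
        have huT : u ∈ T := Finset.mem_of_mem_erase hu
        by_cases hwv : w = v
        · subst hwv
          by_cases hus : u = N.sink
          · subst hus
            rw [ndist_sink]
            exact Nat.zero_le _
          · exact hvmax u (Finset.mem_erase.mpr ⟨hus, huT⟩)
        · have hwT : w ∉ T := fun h => hw (Finset.mem_erase.mpr ⟨hwv, h⟩)
          exact hPref.2 u huT w hwT
      have hmin₀ : ∀ w, w ∉ T₀ → N.ndist v ≤ N.ndist w := by
        intro w hw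
        by_cases hwv : w = v
        · subst hwv; exact le_refl _
        · have hwT : w ∉ T := fun h => hw (Finset.mem_erase.mpr ⟨hwv, h⟩)
          exact hPref.2 v hvT w hwT
      have hcard₀ : T₀.card = n := by
        rw [hT₀, Finset.card_erase_of_mem hvT, hcard]
        rfl
      have hstep := step_lemma hreach hide ha hlen T₀ hPref₀ v
        (Finset.notMem_erase _ _) hmin₀ (ih T₀ hPref₀ hcard₀)
      rw [Finset.insert_erase hvT] at hstep
      exact hstep

end Flow
end Network

/-- if over an interval of length at least
`Σ_e (τ_e + 1/(2ν_e))` less than `1/2` flow volume arrives at the sink, then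
the whole graph is sink-like on the accordingly shortened interval. -/
theorem whole_graph_sinkLike_of_small_sink_inflow (N : Network) (hreach : N.Reachable)
    (f : N.Flow) (hf : f.IsIDE) (a b : ℝ) (ha : 0 ≤ a)
    (hlen : ∑ e, ((N.tau e : ℝ) + 1 / (2 * (N.nu e : ℝ))) ≤ b - a)
    (hin : ∑ e ∈ N.inEdges N.sink, (f.Fm e b - f.Fm e a) < 1/2) :
    f.SinkLike Finset.univ a (b - ∑ e, ((N.tau e : ℝ) + 1 / (2 * (N.nu e : ℝ)))) := by
  classical
  have hlen' : ∑ e, Network.Flow.bud N e ≤ b - a := hlen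
  have hPrefU : N.Pref Finset.univ :=
    ⟨Finset.mem_univ _, fun v _ w hw => absurd (Finset.mem_univ w) hw⟩
  have hmain := Network.Flow.all_pref hreach hf ha hlen' hin
    (Finset.univ.card) Finset.univ hPrefU rfl
  refine ⟨Finset.mem_univ _, fun v _ p _ e _ => ⟨Finset.mem_univ _, Finset.mem_univ _⟩, ?_⟩
  have hβθ : b - ∑ e, ((N.tau e : ℝ) + 1 / (2 * (N.nu e : ℝ)))
      ≤ b - ∑ v ∈ Finset.univ.erase N.sink, Network.Mv N v := by
    have h1 := Network.sum_Mv_le (N := N) hreach _ (Finset.notMem_erase N.sink Finset.univ)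
      (∅ : Finset N.E) (by simp)
    rw [Finset.sum_empty, add_zero] at h1
    have : ∑ e, Network.Flow.bud N e = ∑ e, ((N.tau e : ℝ) + 1 / (2 * (N.nu e : ℝ))) := rfl
    linarith [h1, this.le]
  have haS : a ≤ b - ∑ e, ((N.tau e : ℝ) + 1 / (2 * (N.nu e : ℝ))) := by linarith
  have hδ : N.deltaMinus Finset.univ = ∅ := by
    apply Finset.eq_empty_of_forall_notMem
    intro e he
    unfold Network.deltaMinus at he
    rw [Finset.mem_filter] at he
    exact he.2.1 (Finset.mem_univ _)
  unfold Network.Flow.sig at hmain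
  rw [hδ, Finset.sum_empty] at hmain ⊢
  have hu : ∑ v ∈ Finset.univ.erase N.sink,
        (∫ θ in a..(b - ∑ e, ((N.tau e : ℝ) + 1 / (2 * (N.nu e : ℝ)))), N.u v θ)
      ≤ ∑ v ∈ Finset.univ.erase N.sink,
        ∫ θ in a..(b - ∑ v ∈ Finset.univ.erase N.sink, Network.Mv N v), N.u v θ :=
    Finset.sum_le_sum fun v _ => Network.Flow.U_le (N := N) v haS hβθ
  linarith

end
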